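/- arXiv:2104.09045 — 5 statements merged into one kernel-verified Lean document; each statement's English description precedes it below -/
import Mathlib

section
/- Under uniform label noise with rate η, where a clean label y is kept with probability (1-η) + η/K and flipped to each other class with probability η/K, if the loss ℓ satisfies the symmetric property Σ_{c=1}^K ∇_w ℓ(c, f(x, w)) = 0, then the expected gradient of the loss on a noisy-labeled sample equals (1-η) times the gradient on the clean-labeled sample: E_ỹ[∇_w ℓ(ỹ, f(x, w))] = (1-η) ∇_w ℓ(y, f(x, w)). -/
/-- Under uniform label noise with rate `η`, if the per-class loss gradients sum
to zero (symmetric property), the expected gradient at the noisy label equals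
`(1-η)` times the gradient at the clean label. -/
theorem uniform_noise_expected_gradient (K d : ℕ) (hK : 0 < K)
    (g : Fin K → EuclideanSpace ℝ (Fin d) → ℝ)
    (hdiff : ∀ c, Differentiable ℝ (g c))
    (hsym : ∀ w, ∑ c : Fin K, fderiv ℝ (g c) w = 0)
    (η : ℝ) (hη0 : 0 ≤ η) (hη1 : η ≤ 1)
    (y : Fin K) (w : EuclideanSpace ℝ (Fin d)) :
    ∑ c : Fin K,
        (if c = y then (1 - η) + η / K else η / K) • fderiv ℝ (g c) w
      = (1 - η) • fderiv ℝ (g y) w := by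
  have h1 : ∀ c : Fin K,
      (if c = y then (1 - η) + η / K else η / K) • fderiv ℝ (g c) w
      = (η / K) • fderiv ℝ (g c) w
        + (if c = y then (1 - η) • fderiv ℝ (g c) w else 0) := by
    intro c
    by_cases h : c = y <;> simp [h, add_smul] <;> ring_nf <;> module
  simp only [h1, Finset.sum_add_distrib, Finset.sum_ite_eq']
  rw [← Finset.smul_sum, hsym]
  simp
end

section
/- Under uniform label noise with rate η < 1 applied independently to a batch of m samples, if the loss satisfies the symmetric property, then the expected batch meta-gradient on noisy labels is a positive multiple of the clean batch gradient: E[Σ_{j=1}^m ∇_w ℓ(ỹ_j, f(x_j, w))] = (1-η) Σ_{j=1}^m ∇_w ℓ(y_j, f(x_j, w)), and (1-η) > 0, so the expected noisy gradient direction equals the clean gradient direction. -/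
/-- Batch version: under independent uniform label noise with rate `η < 1` on
`m` samples whose per-class loss gradients each sum to zero, the expected batch
meta-gradient on noisy labels is `(1-η)` times the clean batch gradient, and
`1-η > 0`, so the expected noisy gradient direction equals the clean one. -/
theorem uniform_noise_expected_batch_gradient (K d m : ℕ) (hK : 0 < K)
    (g : Fin m → Fin K → EuclideanSpace ℝ (Fin d) → ℝ)
    (hdiff : ∀ j c, Differentiable ℝ (g j c))
    (hsym : ∀ j w, ∑ c : Fin K, fderiv ℝ (g j c) w = 0)
    (η : ℝ) (hη0 : 0 ≤ η) (hη1 : η < 1)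
    (y : Fin m → Fin K) (w : EuclideanSpace ℝ (Fin d)) :
    (∑ j : Fin m, ∑ c : Fin K,
        (if c = y j then (1 - η) + η / K else η / K) • fderiv ℝ (g j c) w)
      = (1 - η) • ∑ j : Fin m, fderiv ℝ (g j (y j)) w ∧ 0 < 1 - η := by
  constructor
  · rw [Finset.smul_sum]
    refine Finset.sum_congr rfl fun j _ => ?_
    have h1 : ∀ c : Fin K,
        (if c = y j then (1 - η) + η / K else η / K) • fderiv ℝ (g j c) w
          = (η / K) • fderiv ℝ (g j c) w
            + (if c = y j then (1 - η) • fderiv ℝ (g j c) w else 0) := by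
      intro c
      by_cases hc : c = y j <;> simp [hc, add_smul, add_comm]
    simp_rw [h1]
    rw [Finset.sum_add_distrib, ← Finset.smul_sum, hsym j w, smul_zero, zero_add,
      Finset.sum_ite_eq' Finset.univ (y j)]
    simp
  · linarith
end

section
/- If additionally the corrupted class T(y) is drawn uniformly at random from the K-1 classes other than y, and the loss satisfies Σ_{c=1}^K ∇_w ℓ(c, f(x,w)) = 0, then the expectation over T of the noisy expected gradient equals (1 - ηK/(K-1)) ∇_w ℓ(y, f(x,w)); in particular, when η < (K-1)/K this is a positive multiple of the clean gradient. -/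
open Finset

section UniformFlip

variable {ι E : Type*} [Fintype ι] [DecidableEq ι] [AddCommGroup E]

theorem sum_erase_eq_neg_of_sum_eq_zero {v : ι → E} (hv : ∑ c, v c = 0) (y : ι) :
    ∑ c ∈ univ.erase y, v c = -v y := by
  rw [sum_erase_eq_sub (mem_univ y), hv, zero_sub]

variable [Module ℝ E]

theorem inv_smul_sum_erase_flip_eq_smul {v : ι → E} (hcard : 1 < Fintype.card ι)
    (hv : ∑ c, v c = 0) (η : ℝ) (y : ι) :
    ((Fintype.card ι : ℝ) - 1)⁻¹ • ∑ c ∈ univ.erase y, ((1 - η) • v y + η • v c)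
      = (1 - η * Fintype.card ι / ((Fintype.card ι : ℝ) - 1)) • v y := by
  have hpos : (0 : ℝ) < (Fintype.card ι : ℝ) - 1 := by
    rw [sub_pos]; exact_mod_cast hcard
  have hcard_erase : ((#(univ.erase y) : ℕ) : ℝ) = (Fintype.card ι : ℝ) - 1 := by
    rw [card_erase_of_mem (mem_univ y), card_univ, Nat.cast_pred (by omega)]
  rw [sum_add_distrib, sum_const, ← smul_sum, sum_erase_eq_neg_of_sum_eq_zero hv,
    ← Nat.cast_smul_eq_nsmul ℝ, hcard_erase, smul_smul, smul_neg, ← neg_smul, ← add_smul,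
    smul_smul]
  congr 1
  field_simp
  ring

end UniformFlip

theorem one_sub_mul_div_pos {K η : ℝ} (hK : 1 < K) (hη : η < (K - 1) / K) :
    0 < 1 - η * K / (K - 1) := by
  rw [sub_pos, div_lt_one (by linarith), ← lt_div_iff₀ (by linarith)]
  exact hη

theorem flip_noise_uniform_target_expected_gradient_general (K d : ℕ) (hK : 2 ≤ K)
    (g : Fin K → EuclideanSpace ℝ (Fin d) → ℝ)
    (hsym : ∀ w, ∑ c : Fin K, fderiv ℝ (g c) w = 0)
    (η : ℝ)
    (y : Fin K) (w : EuclideanSpace ℝ (Fin d)) :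
    (((K : ℝ) - 1)⁻¹ • ∑ c ∈ Finset.univ.erase y,
        ((1 - η) • fderiv ℝ (g y) w + η • fderiv ℝ (g c) w))
      = (1 - η * K / ((K : ℝ) - 1)) • fderiv ℝ (g y) w ∧
    (η < ((K : ℝ) - 1) / K → 0 < 1 - η * K / ((K : ℝ) - 1)) := by
  have hcard : 1 < Fintype.card (Fin K) := by rw [Fintype.card_fin]; omega
  refine ⟨?_, one_sub_mul_div_pos (by exact_mod_cast hK)⟩
  simpa only [Fintype.card_fin] using
    inv_smul_sum_erase_flip_eq_smul (v := fun c => fderiv ℝ (g c) w) hcard (hsym w) η y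

/-- If the flipped class `T(y)` is drawn uniformly from the `K-1` classes other
than `y` and the per-class gradients sum to zero, then the expectation over `T`
of the noisy expected gradient equals `(1 - ηK/(K-1)) ∇ℓ(y)`; in particular it
is a positive multiple of the clean gradient when `η < (K-1)/K`. -/
theorem flip_noise_uniform_target_expected_gradient (K d : ℕ) (hK : 2 ≤ K)
    (g : Fin K → EuclideanSpace ℝ (Fin d) → ℝ)
    (hdiff : ∀ c, Differentiable ℝ (g c))
    (hsym : ∀ w, ∑ c : Fin K, fderiv ℝ (g c) w = 0)
    (η : ℝ) (hη0 : 0 ≤ η) (hη1 : η ≤ 1)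
    (y : Fin K) (w : EuclideanSpace ℝ (Fin d)) :
    (((K : ℝ) - 1)⁻¹ • ∑ c ∈ Finset.univ.erase y,
        ((1 - η) • fderiv ℝ (g y) w + η • fderiv ℝ (g c) w))
      = (1 - η * K / ((K : ℝ) - 1)) • fderiv ℝ (g y) w ∧
    (η < ((K : ℝ) - 1) / K → 0 < 1 - η * K / ((K : ℝ) - 1)) :=
  flip_noise_uniform_target_expected_gradient_general K d hK g hsym η y w
end

section
/- Let ξ be a random vector in ℝ^d with E[ξ] = g and E[‖ξ - g‖²] = σ². Under uniform label noise with rate η on a single sample, if every per-class gradient is ρ-bounded (‖∇_w ℓ(c, f(x,w))‖ ≤ ρ for all c) and the loss is symmetric, then the variance of the noisy single-sample gradient around its mean (1-η)g satisfies E[‖ξ̃ - (1-η)g‖²] ≤ σ² + 2ηρ², where ξ̃ is the gradient evaluated at the noisy label. -/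
open MeasureTheory

open scoped RealInnerProductSpace

/-- Variance bound for the single-sample gradient under uniform label noise:
if the clean gradient `ω ↦ G ω (y ω)` has mean `g` and variance `σ²`, every
per-class gradient is `ρ`-bounded, and the per-class gradients sum to zero
(symmetric loss), then the noisy gradient (label kept w.p. `(1-η)+η/K`, moved to
each other class w.p. `η/K`) has variance around `(1-η) g` at most
`σ² + 2ηρ²`. -/
theorem uniform_noise_gradient_variance_bound
    (K d : ℕ) (hK : 0 < K)
    {Ω : Type*} [MeasurableSpace Ω] (μ : Measure Ω) [IsProbabilityMeasure μ]
    (G : Ω → Fin K → EuclideanSpace ℝ (Fin d)) (y : Ω → Fin K)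
    (g : EuclideanSpace ℝ (Fin d)) (σ ρ η : ℝ)
    (hρ : 0 ≤ ρ) (hη0 : 0 ≤ η) (hη1 : η ≤ 1)
    (hbound : ∀ ω c, ‖G ω c‖ ≤ ρ)
    (hsym : ∀ ω, ∑ c : Fin K, G ω c = 0)
    (hint_mean : Integrable (fun ω => G ω (y ω)) μ)
    (hmean : ∫ ω, G ω (y ω) ∂μ = g)
    (hint_var : Integrable (fun ω => ‖G ω (y ω) - g‖ ^ 2) μ)
    (hvar : ∫ ω, ‖G ω (y ω) - g‖ ^ 2 ∂μ = σ ^ 2) :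
    ∫ ω, ∑ c : Fin K,
        (if c = y ω then (1 - η) + η / K else η / K) * ‖G ω c - (1 - η) • g‖ ^ 2 ∂μ
      ≤ σ ^ 2 + 2 * η * ρ ^ 2 := by
  have hKR : (0:ℝ) < (K:ℝ) := by exact_mod_cast hK
  have hσ : 0 ≤ σ ^ 2 := by
    rw [← hvar]; exact integral_nonneg fun ω => by positivity
  have hgρ : ‖g‖ ≤ ρ := by
    rw [← hmean]
    calc ‖∫ ω, G ω (y ω) ∂μ‖ ≤ ∫ ω, ‖G ω (y ω)‖ ∂μ := norm_integral_le_integral_norm _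
    _ ≤ ∫ _ω, ρ ∂μ := integral_mono hint_mean.norm (integrable_const ρ) (fun ω => hbound ω _)
    _ = ρ := by simp
  -- pointwise identity
  have key : ∀ ω, (∑ c : Fin K,
        (if c = y ω then (1 - η) + η / K else η / K) * ‖G ω c - (1 - η) • g‖ ^ 2)
      = ((1-η) * ‖G ω (y ω) - g‖^2 + (2*η*(1-η)) * ⟪g, G ω (y ω)⟫ - η*(1-η)*‖g‖^2)
        + (η/K) * ∑ c : Fin K, ‖G ω c‖^2 := by
    intro ω
    have hsplit : ∀ c : Fin K,
        (if c = y ω then (1 - η) + η / K else η / K) * ‖G ω c - (1 - η) • g‖ ^ 2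
        = (η / K) * ‖G ω c - (1 - η) • g‖ ^ 2
          + (if c = y ω then (1-η) * ‖G ω c - (1 - η) • g‖ ^ 2 else 0) := by
      intro c; split_ifs <;> ring
    rw [Finset.sum_congr rfl (fun c _ => hsplit c), Finset.sum_add_distrib,
      Finset.sum_ite_eq' Finset.univ (y ω)]
    simp only [Finset.mem_univ, if_true]
    have hexp : ∀ c : Fin K, ‖G ω c - (1 - η) • g‖ ^ 2
        = ‖G ω c‖^2 - 2 * ((1-η) * ⟪G ω c, g⟫) + (1-η)^2 * ‖g‖^2 := by
      intro c
      rw [norm_sub_sq_real, real_inner_smul_right, norm_smul]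
      simp [mul_pow, abs_of_nonneg (by linarith : (0:ℝ) ≤ 1 - η)]
    have hsum0 : ∑ c : Fin K, ⟪G ω c, g⟫ = 0 := by
      rw [← sum_inner, hsym ω, inner_zero_left]
    have hnormeq : ‖G ω (y ω) - g‖^2 = ‖G ω (y ω)‖^2 - 2 * ⟪G ω (y ω), g⟫ + ‖g‖^2 :=
      norm_sub_sq_real _ _
    have hsumexp : ∑ c : Fin K, ‖G ω c - (1 - η) • g‖ ^ 2
        = (∑ c : Fin K, ‖G ω c‖^2) + (K:ℝ) * ((1-η)^2 * ‖g‖^2) := by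
      rw [Finset.sum_congr rfl (fun c _ => hexp c)]
      rw [Finset.sum_add_distrib, Finset.sum_sub_distrib, ← Finset.mul_sum, ← Finset.mul_sum,
        hsum0]
      simp [Finset.sum_const, Finset.card_univ]
    rw [← Finset.mul_sum, hsumexp, hexp (y ω), hnormeq, real_inner_comm g (G ω (y ω))]
    field_simp
    ring
  by_cases hF : Integrable (fun ω => ∑ c : Fin K,
      (if c = y ω then (1 - η) + η / K else η / K) * ‖G ω c - (1 - η) • g‖ ^ 2) μ
  · -- main case
    set A : Ω → ℝ := fun ω =>
      (1-η) * ‖G ω (y ω) - g‖^2 + (2*η*(1-η)) * ⟪g, G ω (y ω)⟫ - η*(1-η)*‖g‖^2 with hA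
    have h1 : Integrable (fun ω => (1-η) * ‖G ω (y ω) - g‖^2) μ := hint_var.const_mul _
    have h2 : Integrable (fun ω => (2*η*(1-η)) * ⟪g, G ω (y ω)⟫) μ :=
      (hint_mean.const_inner g).const_mul _
    have h12 : Integrable
        (fun ω => (1-η) * ‖G ω (y ω) - g‖^2 + (2*η*(1-η)) * ⟪g, G ω (y ω)⟫) μ := h1.add h2
    have hA_int : Integrable A μ := h12.sub (integrable_const _)
    have hA_val : ∫ ω, A ω ∂μ = (1-η) * σ^2 + (2*η*(1-η)) * ‖g‖^2 - η*(1-η)*‖g‖^2 := by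
      rw [hA]
      rw [integral_sub h12 (integrable_const _), integral_add h1 h2,
        integral_const_mul, integral_const_mul, integral_inner hint_mean, hmean, hvar,
        integral_const, real_inner_self_eq_norm_sq]
      simp
    set B : Ω → ℝ := fun ω => (η/K) * ∑ c : Fin K, ‖G ω c‖^2 with hB
    have hB_int : Integrable B μ := by
      have : B = (fun ω => (∑ c : Fin K,
          (if c = y ω then (1 - η) + η / K else η / K) * ‖G ω c - (1 - η) • g‖ ^ 2) - A ω) := by
        funext ω; rw [key ω]; ring
      rw [this]; exact hF.sub hA_int
    have hB_le : ∫ ω, B ω ∂μ ≤ η * ρ^2 := by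
      calc ∫ ω, B ω ∂μ ≤ ∫ _ω, η * ρ^2 ∂μ := by
            apply integral_mono hB_int (integrable_const _)
            intro ω
            have h1 : ∑ c : Fin K, ‖G ω c‖^2 ≤ (K:ℝ) * ρ^2 := by
              calc ∑ c : Fin K, ‖G ω c‖^2 ≤ ∑ _c : Fin K, ρ^2 :=
                    Finset.sum_le_sum fun c _ => by
                      have := hbound ω c
                      have := norm_nonneg (G ω c)
                      nlinarith
              _ = (K:ℝ) * ρ^2 := by simp [mul_comm]
            have : (η/K) * ∑ c : Fin K, ‖G ω c‖^2 ≤ (η/K) * ((K:ℝ) * ρ^2) := by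
              apply mul_le_mul_of_nonneg_left h1 (by positivity)
            calc B ω ≤ (η/K) * ((K:ℝ) * ρ^2) := this
            _ = η * ρ^2 := by field_simp
      _ = η * ρ^2 := by simp
    have hcombine : ∫ ω, (∑ c : Fin K,
        (if c = y ω then (1 - η) + η / K else η / K) * ‖G ω c - (1 - η) • g‖ ^ 2) ∂μ
        = ∫ ω, A ω ∂μ + ∫ ω, B ω ∂μ := by
      rw [← integral_add hA_int hB_int]
      exact integral_congr_ae (Filter.Eventually.of_forall fun ω => key ω)
    rw [hcombine, hA_val]
    have hg2 : ‖g‖^2 ≤ ρ^2 := by nlinarith [norm_nonneg g]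
    nlinarith [hB_le, mul_nonneg hη0 hσ,
      mul_nonneg (mul_nonneg hη0 (sub_nonneg.mpr hη1)) (sub_nonneg.mpr hg2),
      mul_nonneg (mul_nonneg hη0 hη0) (sq_nonneg ρ)]
  · rw [integral_undef hF]
    nlinarith [hσ, mul_nonneg hη0 (sq_nonneg ρ)]
end

section
/- Let F: ℝ^p → ℝ be L-Lipschitz-smooth (gradient L-Lipschitz) and bounded below. Consider iterates Θ^{t+1} = Θ^t - β_t((1-η)∇F(Θ^t) + ξ^t), where 0 ≤ η < 1, E[ξ^t | Θ^t] = 0, E[‖ξ^t‖² | Θ^t] ≤ σ̂², and β_t = β is constant with β ≤ 1/L and 2(1-η)β - (1-η)²Lβ² ≥ (1-η)β. Then min_{1 ≤ t ≤ T} E[‖∇F(Θ^t)‖²] ≤ (2(F(Θ^1) - inf F) + TLσ̂²β²) / ((1-η)βT). -/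
open MeasureTheory
open scoped RealInnerProductSpace

/-!
Smoothness gives the descent inequality
`F(Θᵗ⁺¹) ≤ F(Θᵗ) - a ‖∇F(Θᵗ)‖² + c ⟪∇F(Θᵗ), ξᵗ⟫ + Lβ²/2 ‖ξᵗ‖²` with `a ≥ (1-η)β/2` by the
step-size condition. Since `∇F(Θᵗ)` is `σ(Θᵗ)`-measurable, the pull-out property of conditional
expectation kills the cross term in expectation, and the conditional second moment bounds the last
one by `Lβ²σ̂²/2`. Telescoping over `t = 1, …, T` and bounding `E F(Θᵀ⁺¹)` below by `inf F` bounds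
`T` times the smallest `E‖∇F(Θᵗ)‖²` by the sum of all of them.
-/

section Descent

variable {E : Type*} [NormedAddCommGroup E] [InnerProductSpace ℝ E] [CompleteSpace E]
  {f : E → ℝ} {L : ℝ}

theorem le_add_inner_gradient_add_sq_of_lipschitz_gradient (hf : Differentiable ℝ f)
    (hlip : ∀ u v, ‖gradient f u - gradient f v‖ ≤ L * ‖u - v‖) (x y : E) :
    f y ≤ f x + ⟪gradient f x, y - x⟫ + L / 2 * ‖y - x‖ ^ 2 := by
  set v := y - x
  -- `φ' s = ⟪∇f (x + s v) - ∇f x, v⟫ - L s ‖v‖² ≤ 0`, so `φ 1 ≤ φ 0` is the claim.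
  let φ : ℝ → ℝ := fun s => f (x + s • v) - s * ⟪gradient f x, v⟫ - L / 2 * s ^ 2 * ‖v‖ ^ 2
  have hφ : ∀ s, HasDerivAt φ
      (⟪gradient f (x + s • v) - gradient f x, v⟫ - L * s * ‖v‖ ^ 2) s := by
    intro s
    have hline : HasDerivAt (fun s : ℝ => x + s • v) v s := by
      simpa using ((hasDerivAt_id s).smul_const v).const_add x
    refine ((((hf _).hasGradientAt.hasFDerivAt.comp_hasDerivAt s hline).sub
      ((hasDerivAt_id s).mul_const ⟪gradient f x, v⟫)).sub
      (((hasDerivAt_pow 2 s).const_mul (L / 2)).mul_const (‖v‖ ^ 2))).congr_deriv ?_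
    rw [inner_sub_left, InnerProductSpace.toDual_apply_apply]
    ring
  have hanti : AntitoneOn φ (Set.Icc 0 1) := by
    refine antitoneOn_of_deriv_nonpos (convex_Icc 0 1)
      (fun s _ => (hφ s).continuousAt.continuousWithinAt)
      (fun s _ => (hφ s).differentiableAt.differentiableWithinAt) fun s hs => ?_
    rw [interior_Icc] at hs
    rw [(hφ s).deriv, sub_nonpos]
    calc ⟪gradient f (x + s • v) - gradient f x, v⟫
        ≤ ‖gradient f (x + s • v) - gradient f x‖ * ‖v‖ := real_inner_le_norm _ _
      _ ≤ L * ‖s • v‖ * ‖v‖ := by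
          gcongr
          simpa using hlip (x + s • v) x
      _ = L * s * ‖v‖ ^ 2 := by
          rw [norm_smul, Real.norm_of_nonneg hs.1.le]
          ring
  have := hanti (Set.left_mem_Icc.2 zero_le_one) (Set.right_mem_Icc.2 zero_le_one) zero_le_one
  simp only [φ, one_smul, zero_smul, add_zero, v, add_sub_cancel] at this
  linarith

theorem apply_gradient_step_le (hf : Differentiable ℝ f)
    (hlip : ∀ u v, ‖gradient f u - gradient f v‖ ≤ L * ‖u - v‖) (x z : E) (β e : ℝ) :
    f (x - β • (e • gradient f x + z)) ≤ f x - (e * β - L * β ^ 2 * e ^ 2 / 2) * ‖gradient f x‖ ^ 2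
      + (L * β ^ 2 * e - β) * ⟪gradient f x, z⟫ + L * β ^ 2 / 2 * ‖z‖ ^ 2 := by
  have h := le_add_inner_gradient_add_sq_of_lipschitz_gradient hf hlip x
    (x - β • (e • gradient f x + z))
  rw [sub_sub_cancel_left, norm_neg, inner_neg_right, norm_smul, mul_pow, Real.norm_eq_abs,
    sq_abs, norm_add_sq_real, norm_smul, mul_pow, Real.norm_eq_abs, sq_abs, inner_smul_right,
    inner_add_right, inner_smul_right, real_inner_smul_left, real_inner_self_eq_norm_sq] at h
  linarith

end Descent

section Probability

variable {Ω E : Type*} {m m₀ : MeasurableSpace Ω} {μ : Measure Ω}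
  [NormedAddCommGroup E] [InnerProductSpace ℝ E]

theorem integrable_inner_of_integrable_norm_sq {X Y : Ω → E}
    (hX : AEStronglyMeasurable X μ) (hY : AEStronglyMeasurable Y μ)
    (hX2 : Integrable (fun ω => ‖X ω‖ ^ 2) μ) (hY2 : Integrable (fun ω => ‖Y ω‖ ^ 2) μ) :
    Integrable (fun ω => ⟪X ω, Y ω⟫) μ :=
  memLp_one_iff_integrable.1 <| (innerSL ℝ).memLp_of_bilin 1
    ((memLp_two_iff_integrable_sq_norm hX).2 hX2) ((memLp_two_iff_integrable_sq_norm hY).2 hY2)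

theorem integral_inner_eq_zero_of_condExp_eq_zero [CompleteSpace E] [IsFiniteMeasure μ]
    (hm : m ≤ m₀) {G N : Ω → E} (hG : StronglyMeasurable[m] G)
    (hGN : Integrable (fun ω => ⟪G ω, N ω⟫) μ) (hN : Integrable N μ) (hcond : μ[N | m] =ᵐ[μ] 0) :
    ∫ ω, ⟪G ω, N ω⟫ ∂μ = 0 := by
  calc ∫ ω, ⟪G ω, N ω⟫ ∂μ = ∫ ω, (μ[fun ω => ⟪G ω, N ω⟫ | m]) ω ∂μ := (integral_condExp hm).symm
    _ = ∫ ω, ⟪G ω, (μ[N | m]) ω⟫ ∂μ :=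
      integral_congr_ae (condExp_bilin_of_stronglyMeasurable_left (innerSL ℝ) hG hGN hN)
    _ = 0 := by
      rw [integral_congr_ae (hcond.mono fun ω hω => by rw [hω, Pi.zero_apply, inner_zero_right])]
      simp

theorem integral_le_of_ae_condExp_le [IsProbabilityMeasure μ] (hm : m ≤ m₀) {f : Ω → ℝ} {c : ℝ}
    (hc : ∀ᵐ ω ∂μ, (μ[f | m]) ω ≤ c) : ∫ ω, f ω ∂μ ≤ c := by
  rw [← integral_condExp hm]
  simpa using integral_mono_ae integrable_condExp (integrable_const c) hc

end Probability

theorem exists_lt_mul_le_of_le_sub_add {u g : ℕ → ℝ} {a D b : ℝ}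
    (hstep : ∀ t, u (t + 1) ≤ u t - a * g t + D) (hb : ∀ t, b ≤ u t) {T : ℕ} (hT : 0 < T) :
    ∃ t < T, T * (a * g t) ≤ u 0 - b + T * D := by
  obtain ⟨t, ht, hmin⟩ := (Finset.range T).exists_min_image (fun t => a * g t)
    (Finset.nonempty_range_iff.2 hT.ne')
  refine ⟨t, Finset.mem_range.1 ht, ?_⟩
  calc T * (a * g t) ≤ ∑ s ∈ Finset.range T, a * g s := by
        simpa using Finset.card_nsmul_le_sum _ _ _ hmin
    _ ≤ ∑ s ∈ Finset.range T, (u s - u (s + 1) + D) :=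
        Finset.sum_le_sum fun s _ => by linarith [hstep s]
    _ ≤ u 0 - b + T * D := by
        rw [Finset.sum_add_distrib, Finset.sum_range_sub', Finset.sum_const, Finset.card_range,
          nsmul_eq_mul]
        linarith [hb T]

theorem integral_sgd_step_le {Ω E : Type*} [MeasurableSpace Ω] {μ : Measure Ω}
    [IsProbabilityMeasure μ] [NormedAddCommGroup E] [InnerProductSpace ℝ E] [CompleteSpace E]
    [MeasurableSpace E] [BorelSpace E] [SecondCountableTopology E]
    {f : E → ℝ} {L β e σ : ℝ} (hL : 0 ≤ L) (hf : Differentiable ℝ f)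
    (hlip : ∀ u v, ‖gradient f u - gradient f v‖ ≤ L * ‖u - v‖) (hbdd : BddBelow (Set.range f))
    (hβ : e * β ≤ 2 * e * β - e ^ 2 * L * β ^ 2)
    {X N : Ω → E} (hX : Measurable X) (hN : Integrable N μ)
    (hN2 : Integrable (fun ω => ‖N ω‖ ^ 2) μ)
    (hmean : μ[N | MeasurableSpace.comap X inferInstance] =ᵐ[μ] 0)
    (hvar : ∀ᵐ ω ∂μ, (μ[fun ω' => ‖N ω'‖ ^ 2 | MeasurableSpace.comap X inferInstance]) ω ≤ σ ^ 2)
    (hgrad2 : Integrable (fun ω => ‖gradient f (X ω)‖ ^ 2) μ)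
    (hfX : Integrable (fun ω => f (X ω)) μ) :
    Integrable (fun ω => f (X ω - β • (e • gradient f (X ω) + N ω))) μ ∧
      ∫ ω, f (X ω - β • (e • gradient f (X ω) + N ω)) ∂μ
        ≤ ∫ ω, f (X ω) ∂μ - e * β / 2 * ∫ ω, ‖gradient f (X ω)‖ ^ 2 ∂μ
          + L * β ^ 2 / 2 * σ ^ 2 := by
  have hgrad : Continuous (gradient f) :=
    (LipschitzWith.of_dist_le_mul fun u v => by
      simpa [dist_eq_norm] using (hlip u v).trans (by gcongr; exact L.le_coe_toNNReal)).continuous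
  have hinner : Integrable (fun ω => ⟪gradient f (X ω), N ω⟫) μ :=
    integrable_inner_of_integrable_norm_sq
      (hgrad.comp_aestronglyMeasurable hX.aestronglyMeasurable) hN.1 hgrad2 hN2
  set a := e * β - L * β ^ 2 * e ^ 2 / 2 with ha
  set c := L * β ^ 2 * e - β
  have hA : Integrable (fun ω => f (X ω) - a * ‖gradient f (X ω)‖ ^ 2) μ :=
    hfX.sub (hgrad2.const_mul a)
  have hB : Integrable (fun ω => f (X ω) - a * ‖gradient f (X ω)‖ ^ 2
      + c * ⟪gradient f (X ω), N ω⟫) μ := hA.add (hinner.const_mul c)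
  have hR : Integrable (fun ω => f (X ω) - a * ‖gradient f (X ω)‖ ^ 2
      + c * ⟪gradient f (X ω), N ω⟫ + L * β ^ 2 / 2 * ‖N ω‖ ^ 2) μ := hB.add (hN2.const_mul _)
  have hle := fun ω => apply_gradient_step_le hf hlip (X ω) (N ω) β e
  have hint : Integrable (fun ω => f (X ω - β • (e • gradient f (X ω) + N ω))) μ := by
    obtain ⟨b, hb⟩ := hbdd
    refine integrable_of_le_of_le ?_ (ae_of_all _ fun ω => hb ⟨_, rfl⟩) (ae_of_all _ hle)
      (integrable_const b) hR
    exact hf.continuous.comp_aestronglyMeasurable (by fun_prop)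
  have hzero : ∫ ω, ⟪gradient f (X ω), N ω⟫ ∂μ = 0 :=
    integral_inner_eq_zero_of_condExp_eq_zero hX.comap_le
      (hgrad.comp_stronglyMeasurable (comap_measurable X).stronglyMeasurable) hinner hN hmean
  have hvar' : ∫ ω, ‖N ω‖ ^ 2 ∂μ ≤ σ ^ 2 := integral_le_of_ae_condExp_le hX.comap_le hvar
  refine ⟨hint, (integral_mono hint hR hle).trans ?_⟩
  rw [integral_add hB (hN2.const_mul _), integral_add hA (hinner.const_mul c),
    integral_sub hfX (hgrad2.const_mul a), integral_const_mul, integral_const_mul,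
    integral_const_mul, hzero, mul_zero, add_zero]
  have : e * β / 2 ≤ a := by linarith
  have : 0 ≤ ∫ ω, ‖gradient f (X ω)‖ ^ 2 ∂μ := integral_nonneg fun ω => by positivity
  gcongr

theorem sgd_convergence_noisy_meta_general
    (p : ℕ) (F : EuclideanSpace ℝ (Fin p) → ℝ) (L : ℝ) (hL : 0 < L)
    (hdiff : Differentiable ℝ F)
    (hlip : ∀ u v, ‖gradient F u - gradient F v‖ ≤ L * ‖u - v‖)
    (hbdd : BddBelow (Set.range F))
    {Ω : Type*} [MeasurableSpace Ω] (μ : Measure Ω) [IsProbabilityMeasure μ]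
    (Θ ξ : ℕ → Ω → EuclideanSpace ℝ (Fin p))
    (η β σhat : ℝ) (hη1 : η < 1) (hβ0 : 0 < β)
    (hβstep : (1 - η) * β ≤ 2 * (1 - η) * β - (1 - η) ^ 2 * L * β ^ 2)
    (hrec : ∀ t ω, Θ (t + 1) ω
      = Θ t ω - β • ((1 - η) • gradient F (Θ t ω) + ξ t ω))
    (hmeas : ∀ t, Measurable (Θ t))
    (hintξ : ∀ t, Integrable (ξ t) μ)
    (hint2ξ : ∀ t, Integrable (fun ω => ‖ξ t ω‖ ^ 2) μ)
    (hcondmean : ∀ t,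
      μ[ξ t | MeasurableSpace.comap (Θ t) inferInstance] =ᵐ[μ] 0)
    (hcondvar : ∀ t, ∀ᵐ ω ∂μ,
      (μ[fun ω' => ‖ξ t ω'‖ ^ 2 | MeasurableSpace.comap (Θ t) inferInstance]) ω
        ≤ σhat ^ 2)
    (hintgrad : ∀ t, Integrable (fun ω => ‖gradient F (Θ t ω)‖ ^ 2) μ)
    (Θ₁ : EuclideanSpace ℝ (Fin p)) (hΘ₁ : ∀ ω, Θ 1 ω = Θ₁)
    (T : ℕ) (hT : 1 ≤ T) :
    ∃ t, 1 ≤ t ∧ t ≤ T ∧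
      ∫ ω, ‖gradient F (Θ t ω)‖ ^ 2 ∂μ
        ≤ (2 * (F Θ₁ - sInf (Set.range F)) + T * L * σhat ^ 2 * β ^ 2)
            / ((1 - η) * β * T) := by
  have hstep (t : ℕ) (hFt : Integrable (fun ω => F (Θ t ω)) μ) :=
    integral_sgd_step_le hL.le hdiff hlip hbdd hβstep (hmeas t) (hintξ t) (hint2ξ t)
      (hcondmean t) (hcondvar t) (hintgrad t) hFt
  simp only [← hrec] at hstep
  have hint (t : ℕ) : Integrable (fun ω => F (Θ (t + 1) ω)) μ := by
    induction t with
    | zero => simp [hΘ₁]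
    | succ t ih => exact (hstep _ ih).1
  have hinf (t : ℕ) : sInf (Set.range F) ≤ ∫ ω, F (Θ (t + 1) ω) ∂μ := by
    simpa using integral_mono (integrable_const _) (hint t) fun ω => csInf_le hbdd ⟨_, rfl⟩
  obtain ⟨t, htT, ht⟩ := exists_lt_mul_le_of_le_sub_add
    (u := fun t => ∫ ω, F (Θ (t + 1) ω) ∂μ) (g := fun t => ∫ ω, ‖gradient F (Θ (t + 1) ω)‖ ^ 2 ∂μ)
    (fun t => (hstep _ (hint t)).2) hinf hT
  refine ⟨t + 1, by omega, by omega, ?_⟩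
  simp only [zero_add, hΘ₁, integral_const, probReal_univ, one_smul] at ht
  have : 0 < 1 - η := by linarith
  rw [le_div_iff₀ (by positivity)]
  linarith

/-- SGD convergence for the weighting network objective: for an `L`-smooth,
bounded-below `F`, iterates `Θ^{t+1} = Θ^t - β((1-η)∇F(Θ^t) + ξ^t)` with
conditionally mean-zero noise of conditional second moment at most `σ̂²`, and a
constant step size `β ≤ 1/L` satisfying `2(1-η)β - (1-η)²Lβ² ≥ (1-η)β`, one has
`min_{1 ≤ t ≤ T} E‖∇F(Θ^t)‖² ≤ (2(F(Θ¹) - inf F) + T L σ̂² β²)/((1-η)βT)`. -/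
theorem sgd_convergence_noisy_meta
    (p : ℕ) (F : EuclideanSpace ℝ (Fin p) → ℝ) (L : ℝ) (hL : 0 < L)
    (hdiff : Differentiable ℝ F)
    (hlip : ∀ u v, ‖gradient F u - gradient F v‖ ≤ L * ‖u - v‖)
    (hbdd : BddBelow (Set.range F))
    {Ω : Type*} [MeasurableSpace Ω] (μ : Measure Ω) [IsProbabilityMeasure μ]
    (Θ ξ : ℕ → Ω → EuclideanSpace ℝ (Fin p))
    (η β σhat : ℝ) (hη0 : 0 ≤ η) (hη1 : η < 1) (hβ0 : 0 < β) (hβL : β ≤ 1 / L)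
    (hβstep : (1 - η) * β ≤ 2 * (1 - η) * β - (1 - η) ^ 2 * L * β ^ 2)
    (hrec : ∀ t ω, Θ (t + 1) ω
      = Θ t ω - β • ((1 - η) • gradient F (Θ t ω) + ξ t ω))
    (hmeas : ∀ t, Measurable (Θ t)) (hmeasξ : ∀ t, Measurable (ξ t))
    (hintξ : ∀ t, Integrable (ξ t) μ)
    (hint2ξ : ∀ t, Integrable (fun ω => ‖ξ t ω‖ ^ 2) μ)
    (hcondmean : ∀ t,
      μ[ξ t | MeasurableSpace.comap (Θ t) inferInstance] =ᵐ[μ] 0)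
    (hcondvar : ∀ t, ∀ᵐ ω ∂μ,
      (μ[fun ω' => ‖ξ t ω'‖ ^ 2 | MeasurableSpace.comap (Θ t) inferInstance]) ω
        ≤ σhat ^ 2)
    (hintgrad : ∀ t, Integrable (fun ω => ‖gradient F (Θ t ω)‖ ^ 2) μ)
    (Θ₁ : EuclideanSpace ℝ (Fin p)) (hΘ₁ : ∀ ω, Θ 1 ω = Θ₁)
    (T : ℕ) (hT : 1 ≤ T) :
    ∃ t, 1 ≤ t ∧ t ≤ T ∧
      ∫ ω, ‖gradient F (Θ t ω)‖ ^ 2 ∂μ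
        ≤ (2 * (F Θ₁ - sInf (Set.range F)) + T * L * σhat ^ 2 * β ^ 2)
            / ((1 - η) * β * T) :=
  sgd_convergence_noisy_meta_general p F L hL hdiff hlip hbdd μ Θ ξ η β σhat hη1 hβ0 hβstep hrec
    hmeas hintξ hint2ξ hcondmean hcondvar hintgrad Θ₁ hΘ₁ T hT
end
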